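/- arXiv:1210.0254 — 2 statements merged into one kernel-verified Lean document; each statement's English description precedes it below -/
import Mathlib

section
/- Let n ≥ 2 be an integer and let λ_1, …, λ_n be positive real numbers. Let α, β > 0 be real numbers and suppose that 0 ≥ 1 − α·Σ_{i=1}^n (1/λ_i) + β·Σ_{i=1}^n (1/λ_i²). If 4/n ≤ α²/β < 4/(n−1), then for each i one has λ_i ≤ 2β/(α − √(nα² − 4β)). -/
/-!
Put `x = 1 / λ_i`. Every other reciprocal `y` contributes `α y - β y² ≤ α² / (4β)` to the
hypothesis, so `1 - α x + β x² ≤ (n - 1) α² / (4β)`, which is `(2βx - α)² ≤ nα² - 4β`.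
Hence `2βx ≥ α - √(nα² - 4β)`, and the upper bound `α²/β < 4/(n-1)` makes the right-hand
side positive, so the inequality can be inverted.
-/

open Finset

theorem mul_sub_mul_sq_le {β : ℝ} (hβ : 0 < β) (α y : ℝ) :
    α * y - β * y ^ 2 ≤ α ^ 2 / (4 * β) := by
  rw [le_div_iff₀ (by positivity)]
  nlinarith [sq_nonneg (2 * β * y - α)]

theorem sq_two_mul_mul_sub_le_of_sum {ι : Type*} [Fintype ι] [DecidableEq ι] (f : ι → ℝ)
    {α β : ℝ} (hβ : 0 < β) (h : 1 - α * ∑ j, f j + β * ∑ j, f j ^ 2 ≤ 0) (i : ι) :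
    (2 * β * f i - α) ^ 2 ≤ Fintype.card ι * α ^ 2 - 4 * β := by
  set g : ι → ℝ := fun j => α * f j - β * f j ^ 2
  have hsum : 1 ≤ g i + ∑ j ∈ univ.erase i, g j := by
    rw [add_sum_erase _ _ (mem_univ i), sum_sub_distrib, ← mul_sum, ← mul_sum]
    linarith
  have hrest : ∑ j ∈ univ.erase i, g j ≤ (Fintype.card ι - 1 : ℝ) * (α ^ 2 / (4 * β)) := by
    have hcard : ((univ.erase i).card : ℝ) = Fintype.card ι - 1 := by
      rw [card_erase_of_mem (mem_univ i), card_univ,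
        Nat.cast_sub (Fintype.card_pos_iff.mpr ⟨i⟩), Nat.cast_one]
    rw [← hcard, ← nsmul_eq_mul]
    exact sum_le_card_nsmul _ _ _ fun j _ => mul_sub_mul_sq_le hβ α (f j)
  have hquad : 4 * β * (1 - g i) ≤ (Fintype.card ι - 1 : ℝ) * α ^ 2 := by
    have hle : 1 - g i ≤ (Fintype.card ι - 1 : ℝ) * (α ^ 2 / (4 * β)) := by linarith
    rwa [mul_div_assoc', le_div_iff₀ (by positivity), mul_comm] at hle
  linear_combination hquad

theorem le_two_mul_div_sub_sqrt {l α β D : ℝ} (hl : 0 < l) (hD : √D < α)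
    (h : (2 * β * (1 / l) - α) ^ 2 ≤ D) : l ≤ 2 * β / (α - √D) := by
  have hlow : α - √D ≤ 2 * β * (1 / l) := by
    linarith [neg_abs_le (2 * β * (1 / l) - α), Real.abs_le_sqrt h]
  rw [le_div_iff₀ (by linarith)]
  calc l * (α - √D) ≤ l * (2 * β * (1 / l)) := by gcongr
    _ = 2 * β := by field_simp

theorem eigenvalue_bound_general (n : ℕ) (hn : 2 ≤ n) (lam : Fin n → ℝ)
    (hlam : ∀ i, 0 < lam i) (α β : ℝ) (hα : 0 < α) (hβ : 0 < β)
    (h : 0 ≥ 1 - α * ∑ i, 1 / lam i + β * ∑ i, 1 / (lam i) ^ 2)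
    (h2 : α ^ 2 / β < 4 / ((n : ℝ) - 1)) :
    ∀ i, lam i ≤ 2 * β / (α - Real.sqrt ((n : ℝ) * α ^ 2 - 4 * β)) := by
  intro i
  have hn1 : (0 : ℝ) < n - 1 := by
    have : (2 : ℝ) ≤ n := by exact_mod_cast hn
    linarith
  have hD : (n : ℝ) * α ^ 2 - 4 * β < α ^ 2 := by
    rw [div_lt_div_iff₀ hβ hn1] at h2
    linarith
  have hsqrt : √((n : ℝ) * α ^ 2 - 4 * β) < α := (Real.sqrt_lt' hα).mpr hD
  have hsq := sq_two_mul_mul_sub_le_of_sum (fun j => 1 / lam j) hβ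
    (by simpa only [div_pow, one_pow] using h) i
  rw [Fintype.card_fin] at hsq
  exact le_two_mul_div_sub_sqrt (hlam i) hsqrt hsq

theorem eigenvalue_bound (n : ℕ) (hn : 2 ≤ n) (lam : Fin n → ℝ)
    (hlam : ∀ i, 0 < lam i) (α β : ℝ) (hα : 0 < α) (hβ : 0 < β)
    (h : 0 ≥ 1 - α * ∑ i, 1 / lam i + β * ∑ i, 1 / (lam i) ^ 2)
    (h1 : 4 / (n : ℝ) ≤ α ^ 2 / β) (h2 : α ^ 2 / β < 4 / ((n : ℝ) - 1)) :
    ∀ i, lam i ≤ 2 * β / (α - Real.sqrt ((n : ℝ) * α ^ 2 - 4 * β)) :=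
  eigenvalue_bound_general n hn lam hlam α β hα hβ h h2
end

section
/- Let n ≥ 2 be an integer, and let C₀ > 0, E > 0, and ε with 0 < ε < 1/(n−1) be real numbers. Then there exist real constants A > B > 0 with B·n·E > C₀ and a constant M > 0, depending only on n, C₀, E and ε, such that: whenever λ_1, …, λ_n are positive real numbers satisfying 0 ≥ (B·n·E − C₀) − (A+B)·Σ_{i=1}^n (1/λ_i) + A·((n−1)(1+ε)/(nE))·Σ_{i=1}^n (1/λ_i²), one has λ_i ≤ M for every i. -/
/-!
Put `x = 1 / λ`. Each summand `a x² - b x` of the hypothesis is at least `-b² / (4a)`, so if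
all but one of them are replaced by this minimum, the remaining one is still at most
`-(D - (n - 1) b² / (4a))`. When this margin is positive it forces `b x` to be bounded
below, i.e. `λ` to be bounded above. With `A = (1 + ε) B` the margin is `B n E (1 - θ) - C₀`,
where `θ = (2 + ε)² / (4 (1 + ε)²) < 1`, and `B` is chosen to make it `C₀`.
-/

open Finset

lemma neg_sq_div_le_quadratic {a : ℝ} (ha : 0 < a) (b x : ℝ) :
    -(b ^ 2 / (4 * a)) ≤ a * x ^ 2 - b * x := by
  have hsq : a * x ^ 2 - b * x + b ^ 2 / (4 * a) = a * (x - b / (2 * a)) ^ 2 := by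
    field_simp
    ring
  rw [neg_le_iff_add_nonneg, hsq]
  positivity

lemma le_of_sum_le_of_forall_neg_le {ι : Type*} [Fintype ι] {f : ι → ℝ} {K S : ℝ}
    (hK : ∀ j, -K ≤ f j) (hsum : ∑ j, f j ≤ S) (i : ι) :
    f i ≤ S + (Fintype.card ι - 1) * K := by
  classical
  have hrest : (univ.erase i).card • -K ≤ ∑ j ∈ univ.erase i, f j :=
    card_nsmul_le_sum _ _ _ fun j _ ↦ hK j
  rw [← add_sum_erase _ _ (mem_univ i)] at hsum
  rw [nsmul_eq_mul, cast_card_erase_of_mem (mem_univ i), card_univ] at hrest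
  linarith

theorem le_div_of_sub_sum_inv_add_sum_inv_sq_nonpos {ι : Type*} [Fintype ι] {a b D δ : ℝ}
    (ha : 0 < a) (hδ : 0 < δ) (hD : (Fintype.card ι - 1) * (b ^ 2 / (4 * a)) + δ ≤ D)
    {lam : ι → ℝ} (hlam : ∀ i, 0 < lam i)
    (h : D - b * ∑ i, 1 / lam i + a * ∑ i, 1 / lam i ^ 2 ≤ 0) (i : ι) :
    lam i ≤ b / δ := by
  set f : ι → ℝ := fun j ↦ a * (1 / lam j) ^ 2 - b * (1 / lam j)
  have hsum : ∑ j, f j ≤ -D := by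
    simp only [f, sum_sub_distrib, ← mul_sum, one_div_pow]
    linarith
  have hfi : f i ≤ -δ := by
    linarith [le_of_sum_le_of_forall_neg_le (fun j ↦ neg_sq_div_le_quadratic ha b _) hsum i]
  have hquad : 0 ≤ a * (1 / lam i) ^ 2 := by positivity
  have hinv : δ ≤ b / lam i := by
    rw [← mul_one_div]
    linarith
  rw [le_div_iff₀ (hlam i)] at hinv
  rw [le_div_iff₀ hδ]
  linarith

theorem second_order_core_general (n : ℕ) (hn : 2 ≤ n) (C₀ E ε : ℝ)
    (hC : 0 < C₀) (hE : 0 < E) (hε1 : 0 < ε) :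
    ∃ A B M : ℝ, A > B ∧ B > 0 ∧ B * n * E > C₀ ∧ M > 0 ∧
      ∀ lam : Fin n → ℝ, (∀ i, 0 < lam i) →
        0 ≥ (B * n * E - C₀) - (A + B) * ∑ i, 1 / lam i
            + A * (((n : ℝ) - 1) * (1 + ε) / (n * E)) * ∑ i, 1 / (lam i) ^ 2 →
        ∀ i, lam i ≤ M := by
  have hn1 : (1 : ℝ) < n := by exact_mod_cast hn
  set θ : ℝ := (2 + ε) ^ 2 / (4 * (1 + ε) ^ 2)
  have hθ : θ < 1 := by
    rw [div_lt_one (by positivity)]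
    nlinarith
  set B : ℝ := 2 * C₀ / (n * E * (1 - θ))
  have hB : 0 < B := div_pos (by positivity) (mul_pos (by positivity) (by linarith))
  have hBθ : B * n * E * (1 - θ) = 2 * C₀ := by
    have : 1 - θ ≠ 0 := by linarith
    simp only [B]
    field_simp
  have hK : ((n : ℝ) - 1) * (((1 + ε) * B + B) ^ 2
      / (4 * ((1 + ε) * B * (((n : ℝ) - 1) * (1 + ε) / (n * E))))) = θ * (B * n * E) := by
    have : (n : ℝ) - 1 ≠ 0 := by linarith
    simp only [θ]
    field_simp
    ring
  have hBnE : 2 * C₀ ≤ B * n * E := by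
    have : 0 ≤ B * n * E * θ := by positivity
    linarith
  refine ⟨(1 + ε) * B, B, ((1 + ε) * B + B) / C₀, by nlinarith, hB, by linarith, by positivity, ?_⟩
  intro lam hlam h i
  refine le_div_of_sub_sum_inv_add_sum_inv_sq_nonpos (by positivity) hC ?_ hlam h.le i
  rw [Fintype.card_fin, hK]
  linarith

theorem second_order_core (n : ℕ) (hn : 2 ≤ n) (C₀ E ε : ℝ)
    (hC : 0 < C₀) (hE : 0 < E) (hε1 : 0 < ε) (hε2 : ε < 1 / ((n : ℝ) - 1)) :
    ∃ A B M : ℝ, A > B ∧ B > 0 ∧ B * n * E > C₀ ∧ M > 0 ∧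
      ∀ lam : Fin n → ℝ, (∀ i, 0 < lam i) →
        0 ≥ (B * n * E - C₀) - (A + B) * ∑ i, 1 / lam i
            + A * (((n : ℝ) - 1) * (1 + ε) / (n * E)) * ∑ i, 1 / (lam i) ^ 2 →
        ∀ i, lam i ≤ M :=
  second_order_core_general n hn C₀ E ε hC hE hε1
end
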